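/- arXiv:1608.00860 — 2 statements merged into one kernel-verified Lean document; each statement's English description precedes it below -/
import Mathlib

section
/- Let k be a kernel on 𝒳 and let (T, {S_i}, {X̄_i}) be a hierarchical partitioning of 𝒳 (as in the context). Let j and l be two distinct leaves of T, let r be their least common ancestor, and let (j, j₁, j₂, …, j_s, r) and (l, l₁, l₂, …, l_t, r) be the paths in T connecting j to r and l to r respectively. Let x ∈ S_j and x' ∈ S_l. If x belongs to each landmark tuple X̄_{j₁}, …, X̄_{j_s}, if x' belongs to each landmark tuple X̄_{l₁}, …, X̄_{l_t}, and if at least one of x, x' belongs to X̄_r, then k_hier(x,x') = k(x,x'). -/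
open scoped BigOperators

/-- A symmetric function `k` is a positive-definite kernel if for every finite list of
pairwise distinct points `x₁,…,xₘ` and all real coefficients `α₁,…,αₘ`,
`∑ᵢⱼ αᵢ αⱼ k(xᵢ,xⱼ) ≥ 0`. -/
def PosDefKernel {𝒳 : Type*} (k : 𝒳 → 𝒳 → ℝ) : Prop :=
  ∀ (m : ℕ) (x : Fin m → 𝒳), Function.Injective x →
    ∀ α : Fin m → ℝ, 0 ≤ ∑ i, ∑ j, α i * α j * k (x i) (x j)

/-- A symmetric function `k` is a strictly positive-definite kernel if for every finite list of
pairwise distinct points `x₁,…,xₘ` and all real coefficients not all zero,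
`∑ᵢⱼ αᵢ αⱼ k(xᵢ,xⱼ) > 0`. -/
def StrictPosDefKernel {𝒳 : Type*} (k : 𝒳 → 𝒳 → ℝ) : Prop :=
  ∀ (m : ℕ) (x : Fin m → 𝒳), Function.Injective x →
    ∀ α : Fin m → ℝ, α ≠ 0 → 0 < ∑ i, ∑ j, α i * α j * k (x i) (x j)

/-- A hierarchical partitioning of a set `𝒳`: a finite rooted tree (nodes indexed by
`Fin numNodes`, each nonroot node pointing to its `parent`; nodes are topologically ordered so
that the parent of a nonroot node has a smaller index), assigning to each node `i` a nonempty
subset `S i ⊆ 𝒳` with `S root = 𝒳`, such that the children of any internal node partition it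
into pairwise disjoint nonempty cells, every internal node has at least two children, and each
internal node `i` carries a tuple `lm i` of `nlm i` pairwise distinct landmark points belonging
to `S i` (leaves carry no landmark points). -/
structure HierPartition (𝒳 : Type*) where
  numNodes : ℕ
  root : Fin numNodes
  parent : Fin numNodes → Fin numNodes
  S : Fin numNodes → Set 𝒳
  nlm : Fin numNodes → ℕ
  lm : (i : Fin numNodes) → Fin (nlm i) → 𝒳
  parent_root : parent root = root
  parent_lt : ∀ i, i ≠ root → parent i < i
  S_root : S root = Set.univ
  S_nonempty : ∀ i, (S i).Nonempty
  S_subset : ∀ j, j ≠ root → S j ⊆ S (parent j)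
  S_cover : ∀ i, (∃ j, j ≠ root ∧ parent j = i) →
    ∀ x ∈ S i, ∃ j, j ≠ root ∧ parent j = i ∧ x ∈ S j
  S_disjoint : ∀ j j', j ≠ root → j' ≠ root → parent j = parent j' → j ≠ j' →
    Disjoint (S j) (S j')
  two_children : ∀ i, (∃ j, j ≠ root ∧ parent j = i) →
    ∃ j j', j ≠ root ∧ j' ≠ root ∧ parent j = i ∧ parent j' = i ∧ j ≠ j'
  lm_mem : ∀ i a, lm i a ∈ S i
  lm_inj : ∀ i, Function.Injective (lm i)
  leaf_nlm : ∀ i, (¬∃ j, j ≠ root ∧ parent j = i) → nlm i = 0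

namespace HierPartition

variable {𝒳 : Type*}

/-- A node of the tree is a leaf if it has no children. -/
def IsLeaf (H : HierPartition 𝒳) (i : Fin H.numNodes) : Prop :=
  ¬∃ j, j ≠ H.root ∧ H.parent j = i

/-- The kernel matrix `K(X̄ᵢ, X̄ᵢ)` on the landmark points of node `i`. -/
noncomputable def Kmat (k : 𝒳 → 𝒳 → ℝ) (H : HierPartition 𝒳) (i : Fin H.numNodes) :
    Matrix (Fin (H.nlm i)) (Fin (H.nlm i)) ℝ :=
  Matrix.of fun a b => k (H.lm i a) (H.lm i b)

open Classical in
/-- The row vector `ψ⁽ⁱ⁾(x, X̄ᵢ)` of the hierarchical composition, defined recursively: if the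
child `j` of `i` containing `x` is a leaf then `ψ⁽ⁱ⁾(x,X̄ᵢ) = k(x,X̄ᵢ)`, and otherwise
`ψ⁽ⁱ⁾(x,X̄ᵢ) = ψ⁽ʲ⁾(x,X̄ⱼ)·K(X̄ⱼ,X̄ⱼ)⁻¹·K(X̄ⱼ,X̄ᵢ)`.  (Junk values are returned when `i` is a
leaf or when `x ∉ Sᵢ`.) -/
noncomputable def psi (k : 𝒳 → 𝒳 → ℝ) (H : HierPartition 𝒳) :
    (i : Fin H.numNodes) → 𝒳 → Fin (H.nlm i) → ℝ := fun i x =>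
  if h : ∃ j, j ≠ H.root ∧ H.parent j = i ∧ x ∈ H.S j then
    if H.IsLeaf (Classical.choose h) then fun a => k x (H.lm i a)
    else fun a => ∑ b, ∑ c,
      psi k H (Classical.choose h) x b *
        ((Kmat k H (Classical.choose h))⁻¹ b c) *
        k (H.lm (Classical.choose h) c) (H.lm i a)
  else fun a => k x (H.lm i a)
termination_by i => H.numNodes - i.val
decreasing_by
  have hj := Classical.choose_spec h
  have h1 : i < Classical.choose h := by
    have h2 := H.parent_lt (Classical.choose h) hj.1
    rw [hj.2.1] at h2
    exact h2
  have h1' : i.val < (Classical.choose h).val := h1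
  have h2 := (Classical.choose h).isLt
  omega

open Classical in
/-- The hierarchically defined kernel `k⁽ⁱ⁾` at node `i`: for a leaf it is `k` itself; for an
internal node it equals `k⁽ʲ⁾(x,x')` when `x,x'` belong to a common child `j`, and
`ψ⁽ⁱ⁾(x,X̄ᵢ)·K(X̄ᵢ,X̄ᵢ)⁻¹·ψ⁽ⁱ⁾(X̄ᵢ,x')` otherwise. -/
noncomputable def khat (k : 𝒳 → 𝒳 → ℝ) (H : HierPartition 𝒳) :
    Fin H.numNodes → 𝒳 → 𝒳 → ℝ := fun i x x' =>
  if H.IsLeaf i then k x x'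
  else if h : ∃ j, j ≠ H.root ∧ H.parent j = i ∧ x ∈ H.S j ∧ x' ∈ H.S j then
    khat k H (Classical.choose h) x x'
  else ∑ a, ∑ b, psi k H i x a * ((Kmat k H i)⁻¹ a b) * psi k H i x' b
termination_by i x x' => H.numNodes - i.val
decreasing_by
  have hj := Classical.choose_spec h
  have h1 := H.parent_lt (Classical.choose h) hj.1
  rw [hj.2.1] at h1
  have h1' := Fin.lt_iff_val_lt_val.mp h1
  have h2 := (Classical.choose h).isLt
  omega

/-- The hierarchically compositional kernel `k_hier = k^(root)`. -/
noncomputable def kHier (k : 𝒳 → 𝒳 → ℝ) (H : HierPartition 𝒳) : 𝒳 → 𝒳 → ℝ :=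
  khat k H H.root

end HierPartition

/-- Node `u` is an ancestor of node `v` (possibly `u = v`) if `u` is obtained from `v` by
iterating the parent map. -/
def HierPartition.IsAncestor {𝒳 : Type*} (H : HierPartition 𝒳)
    (u v : Fin H.numNodes) : Prop :=
  ∃ m : ℕ, H.parent^[m] v = u


/-!
Along the path from the leaf `j` up to `r`, every internal node `v` has `x` among its landmarks,
so `ψ⁽ᵛ⁾(x, X̄ᵥ)` is a row of `K(X̄ᵥ, X̄ᵥ)` and is cancelled by the factor `K(X̄ᵥ, X̄ᵥ)⁻¹` of the
recursion at the next node: by induction `ψ⁽ʳ⁾(x, X̄ᵣ) = k(x, X̄ᵣ)`, and likewise for `x'`. Since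
`r` is the least common ancestor, `x` and `x'` lie in different children of `r`, so `k⁽ʳ⁾(x, x')`
is the Nyström form `k(x, X̄ᵣ) K(X̄ᵣ, X̄ᵣ)⁻¹ k(X̄ᵣ, x')`, which reproduces `k(x, x')` when one of
the points is a landmark of `r`. Above `r` the two points share a child, so
`k_hier(x, x') = k⁽ʳ⁾(x, x')`.
-/

namespace Matrix

variable {n R : Type*} [Fintype n] [DecidableEq n] [CommRing R]

theorem sum_sum_row_mul_inv_mul {A : Matrix n n R} (hA : IsUnit A.det) (i : n) (g : n → R) :
    ∑ a, ∑ b, A i a * A⁻¹ a b * g b = g i := by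
  have hrow : ∀ b, ∑ a, A i a * A⁻¹ a b = (1 : Matrix n n R) i b := fun b => by
    rw [← mul_apply, mul_nonsing_inv A hA]
  rw [Finset.sum_comm]
  simp_rw [← Finset.sum_mul, hrow, one_apply, ite_mul, one_mul, zero_mul]
  simp

theorem sum_sum_mul_inv_mul_col {A : Matrix n n R} (hA : IsUnit A.det) (j : n) (f : n → R) :
    ∑ a, ∑ b, f a * A⁻¹ a b * A b j = f j := by
  have hcol : ∀ a, ∑ b, A⁻¹ a b * A b j = (1 : Matrix n n R) a j := fun a => by
    rw [← mul_apply, nonsing_inv_mul A hA]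
  simp_rw [mul_assoc, ← Finset.mul_sum, hcol, one_apply, mul_ite, mul_one, mul_zero]
  simp

end Matrix

namespace HierPartition

variable {𝒳 : Type*} (H : HierPartition 𝒳)

section Tree

theorem lt_of_parent_eq {c i : Fin H.numNodes} (hc : c ≠ H.root) (hci : H.parent c = i) :
    i < c :=
  hci ▸ H.parent_lt c hc

theorem parent_le (v : Fin H.numNodes) : H.parent v ≤ v := by
  by_cases hv : v = H.root
  · rw [hv, H.parent_root]
  · exact (H.parent_lt v hv).le

variable {H}

theorem IsAncestor.refl (v : Fin H.numNodes) : H.IsAncestor v v := ⟨0, rfl⟩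

theorem isAncestor_parent (v : Fin H.numNodes) : H.IsAncestor (H.parent v) v := ⟨1, rfl⟩

theorem IsAncestor.trans {u v w : Fin H.numNodes} (huv : H.IsAncestor u v)
    (hvw : H.IsAncestor v w) : H.IsAncestor u w := by
  obtain ⟨m, rfl⟩ := huv
  obtain ⟨n, rfl⟩ := hvw
  exact ⟨m + n, Function.iterate_add_apply _ _ _ _⟩

theorem IsAncestor.le {u v : Fin H.numNodes} (h : H.IsAncestor u v) : u ≤ v := by
  obtain ⟨m, rfl⟩ := h
  induction m with
  | zero => exact le_rfl
  | succ m ih => exact (Function.iterate_succ_apply' H.parent m v ▸ H.parent_le _).trans ih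

theorem isAncestor_root (v : Fin H.numNodes) : H.IsAncestor H.root v := by
  induction v using WellFoundedLT.induction with
  | _ v ih =>
    by_cases hv : v = H.root
    · exact hv ▸ IsAncestor.refl v
    · exact (ih _ (H.parent_lt v hv)).trans (isAncestor_parent v)

theorem exists_child_isAncestor {i v : Fin H.numNodes} (hiv : H.IsAncestor i v) (hne : i ≠ v) :
    ∃ c, c ≠ H.root ∧ H.parent c = i ∧ H.IsAncestor c v := by
  obtain ⟨m, hm⟩ := hiv
  induction m generalizing v with
  | zero => exact absurd hm.symm hne
  | succ m ih =>
    rw [Function.iterate_succ_apply] at hm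
    by_cases hpv : H.parent v = i
    · refine ⟨v, fun hv => ?_, hpv, IsAncestor.refl v⟩
      exact hne (hpv ▸ hv ▸ H.parent_root)
    · obtain ⟨c, hc, hci, hcv⟩ := ih (Ne.symm hpv) hm
      exact ⟨c, hc, hci, hcv.trans (isAncestor_parent v)⟩

theorem not_isLeaf_of_isAncestor {i v : Fin H.numNodes} (hiv : H.IsAncestor i v) (hne : i ≠ v) :
    ¬H.IsLeaf i := fun hi =>
  let ⟨c, hc, hci, _⟩ := exists_child_isAncestor hiv hne
  hi ⟨c, hc, hci⟩

theorem mem_S_of_isAncestor {x : 𝒳} {u v : Fin H.numNodes} (hx : x ∈ H.S v)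
    (huv : H.IsAncestor u v) : x ∈ H.S u := by
  obtain ⟨m, rfl⟩ := huv
  induction m with
  | zero => exact hx
  | succ m ih =>
    rw [Function.iterate_succ_apply']
    by_cases hroot : H.parent^[m] v = H.root
    · rwa [hroot, H.parent_root, ← hroot]
    · exact H.S_subset _ hroot ih

theorem eq_of_mem_S_of_parent_eq {c c' : Fin H.numNodes} {x : 𝒳} (hc : c ≠ H.root)
    (hc' : c' ≠ H.root) (hp : H.parent c = H.parent c') (hx : x ∈ H.S c) (hx' : x ∈ H.S c') :
    c = c' := by
  by_contra hne
  exact Set.disjoint_left.mp (H.S_disjoint c c' hc hc' hp hne) hx hx'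

theorem isAncestor_of_mem_S_child {i v c : Fin H.numNodes} {x : 𝒳} (hiv : H.IsAncestor i v)
    (hne : i ≠ v) (hc : c ≠ H.root) (hci : H.parent c = i) (hx : x ∈ H.S v)
    (hxc : x ∈ H.S c) : H.IsAncestor c v := by
  obtain ⟨c', hc', hc'i, hc'v⟩ := exists_child_isAncestor hiv hne
  rwa [eq_of_mem_S_of_parent_eq hc hc' (hci.trans hc'i.symm) hxc (mem_S_of_isAncestor hx hc'v)]

end Tree

section Kernel

variable {H} (k : 𝒳 → 𝒳 → ℝ)

open Classical in
theorem psi_of_mem_child {i c : Fin H.numNodes} {x : 𝒳} (hc : c ≠ H.root)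
    (hci : H.parent c = i) (hxc : x ∈ H.S c) :
    psi k H i x = if H.IsLeaf c then fun a => k x (H.lm i a)
      else fun a => ∑ b, ∑ d, psi k H c x b * (Kmat k H c)⁻¹ b d * k (H.lm c d) (H.lm i a) := by
  have h : ∃ c', c' ≠ H.root ∧ H.parent c' = i ∧ x ∈ H.S c' := ⟨c, hc, hci, hxc⟩
  obtain ⟨hc', hc'i, hxc'⟩ := Classical.choose_spec h
  have hchoose : Classical.choose h = c :=
    eq_of_mem_S_of_parent_eq hc' hc (hc'i.trans hci.symm) hxc' hxc
  rw [psi, dif_pos h, hchoose]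

theorem khat_of_mem_child {i c : Fin H.numNodes} {x x' : 𝒳} (hc : c ≠ H.root)
    (hci : H.parent c = i) (hxc : x ∈ H.S c) (hx'c : x' ∈ H.S c) :
    khat k H i x x' = khat k H c x x' := by
  have h : ∃ c', c' ≠ H.root ∧ H.parent c' = i ∧ x ∈ H.S c' ∧ x' ∈ H.S c' :=
    ⟨c, hc, hci, hxc, hx'c⟩
  obtain ⟨hc', hc'i, hxc', -⟩ := Classical.choose_spec h
  have hchoose : Classical.choose h = c :=
    eq_of_mem_S_of_parent_eq hc' hc (hc'i.trans hci.symm) hxc' hxc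
  rw [khat, if_neg fun hi => hi ⟨c, hc, hci⟩, dif_pos h, hchoose]

theorem khat_of_not_exists_child {i : Fin H.numNodes} {x x' : 𝒳} (hi : ¬H.IsLeaf i)
    (hsep : ¬∃ c, c ≠ H.root ∧ H.parent c = i ∧ x ∈ H.S c ∧ x' ∈ H.S c) :
    khat k H i x x' = ∑ a, ∑ b, psi k H i x a * (Kmat k H i)⁻¹ a b * psi k H i x' b := by
  rw [khat, if_neg hi, dif_neg hsep]

theorem khat_eq_of_isAncestor {i r : Fin H.numNodes} {x x' : 𝒳} (hir : H.IsAncestor i r)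
    (hx : x ∈ H.S r) (hx' : x' ∈ H.S r) : khat k H i x x' = khat k H r x x' := by
  induction i using WellFoundedGT.induction with
  | _ i ih =>
    by_cases hi : i = r
    · rw [hi]
    obtain ⟨c, hc, hci, hcr⟩ := exists_child_isAncestor hir hi
    rw [khat_of_mem_child k hc hci (mem_S_of_isAncestor hx hcr) (mem_S_of_isAncestor hx' hcr)]
    exact ih c (H.lt_of_parent_eq hc hci) hcr

theorem psi_eq_of_mem_lm {i j : Fin H.numNodes} {x : 𝒳}
    (hinv : ∀ v, ¬H.IsLeaf v → IsUnit (Kmat k H v).det) (hj : H.IsLeaf j)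
    (hij : H.IsAncestor i j) (hne : i ≠ j) (hx : x ∈ H.S j)
    (hlm : ∀ v, v ≠ j → v ≠ i → H.IsAncestor v j → H.IsAncestor i v → ∃ a, x = H.lm v a) :
    psi k H i x = fun a => k x (H.lm i a) := by
  induction i using WellFoundedGT.induction with
  | _ i ih =>
    obtain ⟨c, hc, hci, hcj⟩ := exists_child_isAncestor hij hne
    have hic := H.lt_of_parent_eq hc hci
    rw [psi_of_mem_child k hc hci (mem_S_of_isAncestor hx hcj)]
    split_ifs with hcleaf
    · rfl
    have hcj' : c ≠ j := fun h => hcleaf (h ▸ hj)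
    have hic' : H.IsAncestor i c := hci ▸ isAncestor_parent c
    obtain ⟨a₀, rfl⟩ := hlm c hcj' hic.ne' hcj hic'
    have hpsi : psi k H c (H.lm c a₀) = Kmat k H c a₀ := by
      refine ih c hic hcj hcj' fun v hvj hvc hvj' hcv => hlm v hvj ?_ hvj' (hic'.trans hcv)
      exact fun hvi => (hvi ▸ hcv.le).not_gt hic
    funext a
    rw [hpsi]
    exact Matrix.sum_sum_row_mul_inv_mul (hinv c hcleaf) a₀ fun d => k (H.lm c d) (H.lm i a)

theorem nystrom_eq_of_mem_lm (hsym : ∀ x y, k x y = k y x) {i : Fin H.numNodes} {x x' : 𝒳}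
    (hinv : IsUnit (Kmat k H i).det) (hlm : (∃ a, x = H.lm i a) ∨ (∃ a, x' = H.lm i a)) :
    ∑ a, ∑ b, k x (H.lm i a) * (Kmat k H i)⁻¹ a b * k x' (H.lm i b) = k x x' := by
  rcases hlm with ⟨a₀, rfl⟩ | ⟨b₀, rfl⟩
  · exact (Matrix.sum_sum_row_mul_inv_mul hinv a₀ fun b => k x' (H.lm i b)).trans (hsym _ _)
  · simp_rw [hsym (H.lm i b₀) (H.lm i _)]
    exact Matrix.sum_sum_mul_inv_mul_col hinv b₀ fun a => k x (H.lm i a)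

end Kernel

end HierPartition

open HierPartition in
/-- let `j` and `l` be two distinct leaves with least common ancestor `r`, let
`x ∈ S_j` and `x' ∈ S_l`.  If `x` belongs to the landmark tuple of every internal node strictly
between `j` and `r` on the path from `j` to `r`, if `x'` belongs to the landmark tuple of every
internal node strictly between `l` and `r` on the path from `l` to `r`, and if at least one of
`x, x'` belongs to the landmark tuple of `r`, then `k_hier(x,x') = k(x,x')`. -/
theorem kHier_eq_of_landmark_path {𝒳 : Type*} (k : 𝒳 → 𝒳 → ℝ)
    (hsym : ∀ x y, k x y = k y x)
    (H : HierPartition 𝒳)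
    (hinv : ∀ i, ¬H.IsLeaf i → IsUnit (HierPartition.Kmat k H i).det)
    (j l r : Fin H.numNodes)
    (hjleaf : H.IsLeaf j) (hlleaf : H.IsLeaf l) (hjl : j ≠ l)
    (hrj : H.IsAncestor r j) (hrl : H.IsAncestor r l)
    (hlca : ∀ u, H.IsAncestor u j → H.IsAncestor u l → H.IsAncestor u r)
    (x x' : 𝒳) (hx : x ∈ H.S j) (hx' : x' ∈ H.S l)
    (hxlm : ∀ v, v ≠ j → v ≠ r → H.IsAncestor v j → H.IsAncestor r v →
      ∃ a, x = H.lm v a)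
    (hx'lm : ∀ v, v ≠ l → v ≠ r → H.IsAncestor v l → H.IsAncestor r v →
      ∃ a, x' = H.lm v a)
    (hr : (∃ a, x = H.lm r a) ∨ (∃ a, x' = H.lm r a)) :
    HierPartition.kHier k H x x' = k x x' := by
  have hrj' : r ≠ j := by
    rintro rfl
    exact not_isLeaf_of_isAncestor hrl hjl hjleaf
  have hrl' : r ≠ l := by
    rintro rfl
    exact not_isLeaf_of_isAncestor hrj hjl.symm hlleaf
  have hsep : ¬∃ c, c ≠ H.root ∧ H.parent c = r ∧ x ∈ H.S c ∧ x' ∈ H.S c := by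
    rintro ⟨c, hc, hcr, hxc, hx'c⟩
    have hcr' := hlca c (isAncestor_of_mem_S_child hrj hrj' hc hcr hx hxc)
      (isAncestor_of_mem_S_child hrl hrl' hc hcr hx' hx'c)
    exact hcr'.le.not_gt (H.lt_of_parent_eq hc hcr)
  rw [kHier, khat_eq_of_isAncestor k (isAncestor_root r) (mem_S_of_isAncestor hx hrj)
      (mem_S_of_isAncestor hx' hrl),
    khat_of_not_exists_child k (not_isLeaf_of_isAncestor hrj hrj') hsep,
    psi_eq_of_mem_lm k hinv hjleaf hrj hrj' hx hxlm,
    psi_eq_of_mem_lm k hinv hlleaf hrl hrl' hx' hx'lm]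
  exact nystrom_eq_of_mem_lm k hsym (hinv r (not_isLeaf_of_isAncestor hrj hrj')) hr
end

section
/- Let k be a positive-definite kernel on 𝒳 and let (T, {S_i}, {X̄_i}) be a hierarchical partitioning of 𝒳 (as in the context), with K(X̄_i,X̄_i) invertible for every internal node i. For each node i of T define ξ^(i) on S_i × S_i as follows: if i is a leaf with parent p, ξ^(i)(x,x') = k(x,x') − k(x,X̄_p)·K(X̄_p,X̄_p)⁻¹·k(X̄_p,x'); if i is internal and not the root, with parent p, ξ^(i)(x,x') = ψ^(i)(x,X̄_i)·K(X̄_i,X̄_i)⁻¹·[K(X̄_i,X̄_i) − K(X̄_i,X̄_p)·K(X̄_p,X̄_p)⁻¹·K(X̄_p,X̄_i)]·K(X̄_i,X̄_i)⁻¹·ψ^(i)(X̄_i,x'); and if i is the root, ξ^(i)(x,x') = ψ^(i)(x,X̄_i)·K(X̄_i,X̄_i)⁻¹·ψ^(i)(X̄_i,x'). Then for every node i of T, ξ^(i) is a positive-definite kernel on S_i: for every finite list of pairwise distinct points x₁,…,xₘ ∈ S_i and all real α₁,…,αₘ, ∑_{a,b} α_a α_b ξ^(i)(x_a,x_b) ≥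 0. -/
open scoped BigOperators

namespace HierPartition

open Classical in
/-- The kernel `ξ⁽ⁱ⁾` associated with node `i` (extended by the same formulas to all of
`𝒳 × 𝒳`): for a leaf `i` with parent `p`,
`ξ⁽ⁱ⁾(x,x') = k(x,x') − k(x,X̄ₚ)K(X̄ₚ,X̄ₚ)⁻¹k(X̄ₚ,x')`; for an internal nonroot `i` with
parent `p`,
`ξ⁽ⁱ⁾(x,x') = ψ⁽ⁱ⁾(x,X̄ᵢ)K(X̄ᵢ,X̄ᵢ)⁻¹[K(X̄ᵢ,X̄ᵢ) − K(X̄ᵢ,X̄ₚ)K(X̄ₚ,X̄ₚ)⁻¹K(X̄ₚ,X̄ᵢ)]K(X̄ᵢ,X̄ᵢ)⁻¹ψ⁽ⁱ⁾(X̄ᵢ,x')`;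
and for the root, `ξ⁽ⁱ⁾(x,x') = ψ⁽ⁱ⁾(x,X̄ᵢ)K(X̄ᵢ,X̄ᵢ)⁻¹ψ⁽ⁱ⁾(X̄ᵢ,x')`. -/
noncomputable def xi {𝒳 : Type*} (k : 𝒳 → 𝒳 → ℝ) (H : HierPartition 𝒳)
    (i : Fin H.numNodes) (x x' : 𝒳) : ℝ :=
  if i = H.root then
    ∑ a, ∑ b, psi k H i x a * ((Kmat k H i)⁻¹ a b) * psi k H i x' b
  else if H.IsLeaf i then
    k x x' - ∑ a, ∑ b,
      k x (H.lm (H.parent i) a) * ((Kmat k H (H.parent i))⁻¹ a b) * k (H.lm (H.parent i) b) x'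
  else
    ∑ a, ∑ b, psi k H i x a *
      (((Kmat k H i)⁻¹ *
        (Kmat k H i -
          (Matrix.of fun a b => k (H.lm i a) (H.lm (H.parent i) b)) *
            (Kmat k H (H.parent i))⁻¹ *
            (Matrix.of fun a b => k (H.lm (H.parent i) a) (H.lm i b))) *
        (Kmat k H i)⁻¹) a b) * psi k H i x' b

end HierPartition

/-!
Every `ξ⁽ⁱ⁾` has one of two shapes. At the root and at internal nodes it is a feature kernel
`φ(x) M φ(x')ᵀ` with `φ = ψ⁽ⁱ⁾` and `M` positive semidefinite: `M = K⁻¹`, or `M = K⁻¹ S K⁻¹`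
with `S` a Schur complement of a Gram matrix of `k`. At a leaf it is the residual kernel
`k(x,x') − k(x,Z) K(Z,Z)⁻¹ k(Z,x')`, whose Gram matrices are again Schur complements, namely
in the Gram matrix of `k` on the sample points followed by `Z`.
-/

open Matrix Finset

theorem Matrix.dotProduct_mulVec_self_eq_sum {ι : Type*} [Fintype ι] (M : Matrix ι ι ℝ)
    (v : ι → ℝ) : v ⬝ᵥ M *ᵥ v = ∑ a, ∑ b, v a * v b * M a b := by
  simp only [dotProduct, mulVec, mul_sum]
  exact sum_congr rfl fun a _ => sum_congr rfl fun b _ => by ring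

theorem Matrix.PosSemidef.sum_mul_mul_nonneg {ι : Type*} [Fintype ι] {M : Matrix ι ι ℝ}
    (hM : M.PosSemidef) (v : ι → ℝ) : 0 ≤ ∑ a, ∑ b, v a * v b * M a b := by
  simpa [dotProduct_mulVec_self_eq_sum] using hM.dotProduct_mulVec_nonneg v

section Kernels

variable {𝒳 : Type*} {k : 𝒳 → 𝒳 → ℝ}

def kernelMatrix (k : 𝒳 → 𝒳 → ℝ) {ι κ : Type*} (y : ι → 𝒳) (z : κ → 𝒳) : Matrix ι κ ℝ :=
  Matrix.of fun a b => k (y a) (z b)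

noncomputable def residualKernel (k : 𝒳 → 𝒳 → ℝ) {κ : Type*} [Fintype κ] [DecidableEq κ]
    (z : κ → 𝒳) (x x' : 𝒳) : ℝ :=
  k x x' - ∑ a, ∑ b, k x (z a) * (kernelMatrix k z z)⁻¹ a b * k (z b) x'

theorem PosDefKernel.sum_finset_nonneg (hk : PosDefKernel k) (t : Finset 𝒳) (β : 𝒳 → ℝ) :
    0 ≤ ∑ y ∈ t, ∑ z ∈ t, β y * β z * k y z := by
  have h := hk t.card (fun c => t.equivFin.symm c)
    (fun c d h => t.equivFin.symm.injective (Subtype.ext h)) (fun c => β (t.equivFin.symm c))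
  simpa only [← sum_coe_sort t, ← t.equivFin.symm.sum_comp] using h

theorem PosDefKernel.sum_nonneg (hk : PosDefKernel k) {ι : Type*} [Fintype ι] (x : ι → 𝒳)
    (α : ι → ℝ) : 0 ≤ ∑ i, ∑ j, α i * α j * k (x i) (x j) := by
  classical
  -- merge the coefficients of repeated points, since `PosDefKernel` only sees distinct ones
  set t := univ.image x
  set β : 𝒳 → ℝ := fun y => ∑ i with x i = y, α i
  have merge (F : 𝒳 → ℝ) : ∑ i, α i * F (x i) = ∑ y ∈ t, β y * F y := by
    simp only [β, sum_mul]
    rw [← sum_fiberwise_of_maps_to fun i _ => mem_image_of_mem x (mem_univ i)]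
    exact sum_congr rfl fun y _ => sum_congr rfl fun i hi => by rw [(mem_filter.mp hi).2]
  have h := hk.sum_finset_nonneg t β
  simp only [mul_assoc, ← mul_sum] at h ⊢
  rwa [merge fun y => ∑ j, α j * k y (x j), sum_congr rfl fun y _ => by rw [merge (k y)]]

theorem PosDefKernel.posSemidef_kernelMatrix (hsym : ∀ x y, k x y = k y x)
    (hk : PosDefKernel k) {ι : Type*} [Fintype ι] (x : ι → 𝒳) :
    (kernelMatrix k x x).PosSemidef := by
  refine .of_dotProduct_mulVec_nonneg ?_ fun v => ?_
  · ext a b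
    simp [kernelMatrix, hsym (x a)]
  · simpa [dotProduct_mulVec_self_eq_sum, kernelMatrix] using hk.sum_nonneg x v

theorem PosDefKernel.posSemidef_schurComplement (hsym : ∀ x y, k x y = k y x)
    (hk : PosDefKernel k) {ι κ : Type*} [Fintype ι] [Fintype κ] [DecidableEq κ]
    (y : ι → 𝒳) (z : κ → 𝒳) :
    (kernelMatrix k y y - kernelMatrix k y z * (kernelMatrix k z z)⁻¹ *
      kernelMatrix k z y).PosSemidef := by
  by_cases hdet : IsUnit (kernelMatrix k z z).det
  · have hP := (hk.posSemidef_kernelMatrix hsym z).posDef_iff_det_ne_zero.mpr hdet.ne_zero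
    have := (kernelMatrix k z z).invertibleOfIsUnitDet hdet
    have hzy : (kernelMatrix k y z)ᴴ = kernelMatrix k z y := by
      ext a b
      simp [kernelMatrix, hsym (y b)]
    have hblocks : kernelMatrix k (Sum.elim y z) (Sum.elim y z) =
        fromBlocks (kernelMatrix k y y) (kernelMatrix k y z) (kernelMatrix k y z)ᴴ
          (kernelMatrix k z z) := by
      rw [hzy]
      ext (a | a) (b | b) <;> rfl
    rw [← hzy, ← PosDef.fromBlocks₂₂ _ _ hP, ← hblocks]
    exact hk.posSemidef_kernelMatrix hsym _
  · -- a singular `K(Z,Z)` has junk inverse `0`, leaving the Gram matrix of `y`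
    simpa [nonsing_inv_apply_not_isUnit _ hdet] using hk.posSemidef_kernelMatrix hsym y

theorem PosDefKernel.residual (hsym : ∀ x y, k x y = k y x) (hk : PosDefKernel k)
    {κ : Type*} [Fintype κ] [DecidableEq κ] (z : κ → 𝒳) :
    PosDefKernel (residualKernel k z) := by
  intro m x _ α
  convert (hk.posSemidef_schurComplement hsym x z).sum_mul_mul_nonneg α using 5 with c - d
  simp only [residualKernel, kernelMatrix, Matrix.sub_apply, mul_apply, of_apply, sum_mul]
  rw [sum_comm]

theorem PosDefKernel.of_posSemidef {ι : Type*} [Fintype ι] {M : Matrix ι ι ℝ}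
    (hM : M.PosSemidef) (φ : 𝒳 → ι → ℝ) :
    PosDefKernel fun x x' => ∑ a, ∑ b, φ x a * M a b * φ x' b := by
  intro m x _ α
  have key : ∑ c, ∑ d, α c * α d * ∑ a, ∑ b, φ (x c) a * M a b * φ (x d) b =
      ∑ a, ∑ b, (∑ c, α c * φ (x c) a) * (∑ d, α d * φ (x d) b) * M a b :=
    calc _ = ∑ c, ∑ a, ∑ b, ∑ d, α c * φ (x c) a * (α d * φ (x d) b) * M a b := by
          simp only [mul_sum]
          refine sum_congr rfl fun c _ => ?_
          rw [sum_comm]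
          refine sum_congr rfl fun a _ => ?_
          rw [sum_comm]
          exact sum_congr rfl fun b _ => sum_congr rfl fun d _ => by ring
      _ = _ := by
          simp only [sum_mul, mul_sum]
          rw [sum_comm]
          refine sum_congr rfl fun a _ => ?_
          rw [sum_comm]
          exact sum_congr rfl fun b _ => sum_comm
  exact key ▸ hM.sum_mul_mul_nonneg _

end Kernels

theorem xi_posDefKernel_general {𝒳 : Type*} (k : 𝒳 → 𝒳 → ℝ)
    (hsym : ∀ x y, k x y = k y x)
    (hk : PosDefKernel k)
    (H : HierPartition 𝒳) :
    ∀ (i : Fin H.numNodes) (m : ℕ) (x : Fin m → 𝒳), Function.Injective x →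
      (∀ a, x a ∈ H.S i) → ∀ α : Fin m → ℝ,
        0 ≤ ∑ a, ∑ b, α a * α b * HierPartition.xi k H i (x a) (x b) := by
  intro i m x hx _ α
  have hKinv : ((HierPartition.Kmat k H i)⁻¹).PosSemidef :=
    (hk.posSemidef_kernelMatrix hsym (H.lm i)).inv
  by_cases hroot : i = H.root
  · simp only [HierPartition.xi, if_pos hroot]
    exact PosDefKernel.of_posSemidef hKinv (H.psi k i) m x hx α
  by_cases hleaf : H.IsLeaf i
  · simp only [HierPartition.xi, if_neg hroot, if_pos hleaf]
    exact hk.residual hsym (H.lm (H.parent i)) m x hx α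
  · have hM := (hk.posSemidef_schurComplement hsym (H.lm i) (H.lm (H.parent i))
      ).mul_mul_conjTranspose_same (HierPartition.Kmat k H i)⁻¹
    rw [hKinv.1.eq] at hM
    simp only [HierPartition.xi, if_neg hroot, if_neg hleaf]
    exact PosDefKernel.of_posSemidef hM (H.psi k i) m x hx α

/-- if `k` is a positive-definite kernel, then for every node `i` the kernel
`ξ⁽ⁱ⁾` is positive-definite on `Sᵢ`: for every finite list of pairwise distinct points of `Sᵢ`
and all real coefficients, `∑_{a,b} α_a α_b ξ⁽ⁱ⁾(x_a,x_b) ≥ 0`. -/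
theorem xi_posDefKernel {𝒳 : Type*} (k : 𝒳 → 𝒳 → ℝ)
    (hsym : ∀ x y, k x y = k y x)
    (hk : PosDefKernel k)
    (H : HierPartition 𝒳)
    (hinv : ∀ i, ¬H.IsLeaf i → IsUnit (HierPartition.Kmat k H i).det) :
    ∀ (i : Fin H.numNodes) (m : ℕ) (x : Fin m → 𝒳), Function.Injective x →
      (∀ a, x a ∈ H.S i) → ∀ α : Fin m → ℝ,
        0 ≤ ∑ a, ∑ b, α a * α b * HierPartition.xi k H i (x a) (x b) :=
  xi_posDefKernel_general k hsym hk H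
end
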